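/- Let (X,d) be a compact metric space and f : X → X a homeomorphism. Suppose there is η > 0 such that for all n ≥ 1, any two points lying on distinct periodic orbits of period dividing n are (η,n)-separated, and suppose the specification-based counting bound holds: for every ε < η and all n, s(ε,n,f) ≤ card(Fix(f^{n+N(ε)})) for some N(ε) ∈ ℕ. Then h_top(f) = limsup_{n→∞} (1/n) log card(Fix(f^n)). -/

import Mathlib

open Filter Topology MeasureTheory

/-- `E` is an `(ε,n)`-separated set for `f`. -/
def IsSeparated {X : Type*} [MetricSpace X] (f : X → X) (ε : ℝ) (n : ℕ) (E : Set X) : Prop :=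
  ∀ x ∈ E, ∀ y ∈ E, x ≠ y → ∃ k < n, ε < dist (f^[k] x) (f^[k] y)

/-- Maximal cardinality of an `(ε,n)`-separated set. -/
noncomputable def sepCount {X : Type*} [MetricSpace X] (f : X → X) (ε : ℝ) (n : ℕ) : ℕ :=
  sSup {m : ℕ | ∃ E : Finset X, IsSeparated f ε n ↑E ∧ E.card = m}

/-- Exponential growth rate of `(ε,n)`-separated sets. -/
noncomputable def entSep {X : Type*} [MetricSpace X] (f : X → X) (ε : ℝ) : ℝ :=
  Filter.limsup (fun n : ℕ => Real.log (sepCount f ε n) / n) Filter.atTop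

/-- Topological entropy via separated sets: the limit as `ε → 0` (equivalently, the
supremum over `ε > 0`, by monotonicity) of the growth rate of `(ε,n)`-separated sets. -/
noncomputable def topEnt {X : Type*} [MetricSpace X] (f : X → X) : ℝ :=
  ⨆ ε : {e : ℝ // 0 < e}, entSep f ε.1

/-- Growth rate of periodic points: `limsup (1/n) log card Fix(fⁿ)`. -/
noncomputable def perGrowth {X : Type*} [MetricSpace X] (f : X → X) : ℝ :=
  Filter.limsup (fun n : ℕ => Real.log (({x : X | f^[n] x = x}).ncard) / n) Filter.atTop

open Function Finset

/-!
Both inequalities compare exponential growth rates up to a polynomial factor and a bounded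
time shift, neither of which changes `limsup (1/n) log`. Picking one point on each periodic
orbit of period dividing `n` gives an `(η, n)`-separated set, and each such orbit has at most `n`
points, so `card Fix(fⁿ) ≤ n · s(η, n)`; this gives `p(f) ≤ h(f)`. Conversely `s(ε, n)`
grows as `ε` shrinks, so every scale is dominated by one below `η`, where the counting bound
gives `s(ε, n) ≤ card Fix(f^{n + N(ε)})`; this gives `h(f) ≤ p(f)`.
-/

lemma log_natCast_le_log_natCast {a b : ℕ} (h : a ≤ b) : Real.log a ≤ Real.log b := by
  rcases a.eq_zero_or_pos with rfl | ha
  · simpa using Real.log_natCast_nonneg b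
  · exact Real.log_le_log (Nat.cast_pos.2 ha) (Nat.cast_le.2 h)

lemma log_natCast_mul_le (a b : ℕ) : Real.log ↑(a * b) ≤ Real.log a + Real.log b := by
  rcases a.eq_zero_or_pos with rfl | ha
  · simpa using Real.log_natCast_nonneg b
  rcases b.eq_zero_or_pos with rfl | hb
  · simpa using Real.log_natCast_nonneg a
  rw [Nat.cast_mul, Real.log_mul (by positivity) (by positivity)]

section GrowthRate

/-- `entSep f ε` and `perGrowth f` are both definitionally of this form. -/
noncomputable def growthRate (a : ℕ → ℕ) : ℝ :=
  limsup (fun n : ℕ => Real.log (a n) / n) atTop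

variable {a b : ℕ → ℕ} {m N : ℕ}

lemma log_natCast_div_natCast_nonneg (k n : ℕ) : 0 ≤ Real.log k / n :=
  div_nonneg (Real.log_natCast_nonneg k) n.cast_nonneg

lemma isBoundedUnder_log_div (ha : ∀ᶠ n in atTop, a n ≤ m ^ n) :
    IsBoundedUnder (· ≤ ·) atTop (fun n : ℕ => Real.log (a n) / n) := by
  refine ⟨Real.log m, eventually_map.2 ?_⟩
  filter_upwards [ha] with n hn
  rcases n.eq_zero_or_pos with rfl | hpos
  · simpa using Real.log_natCast_nonneg m
  rw [div_le_iff₀ (Nat.cast_pos.2 hpos), mul_comm, ← Real.log_pow, ← Nat.cast_pow]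
  exact log_natCast_le_log_natCast hn

lemma growthRate_nonneg (ha : ∀ᶠ n in atTop, a n ≤ m ^ n) : 0 ≤ growthRate a :=
  le_limsup_of_frequently_le (Frequently.of_forall fun n => log_natCast_div_natCast_nonneg (a n) n)
    (isBoundedUnder_log_div ha)

theorem growthRate_le_of_le_mul_shift (hb : ∀ᶠ n in atTop, b n ≤ m ^ n)
    (hab : ∀ᶠ n in atTop, a n ≤ n * b (n + N)) : growthRate a ≤ growthRate b := by
  refine le_of_forall_gt_imp_ge_of_dense fun c hc => ?_
  obtain ⟨c', hbc', hc'c⟩ := exists_between hc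
  have hc' : 0 ≤ c' := (growthRate_nonneg hb).trans hbc'.le
  have hb_lt : ∀ᶠ n : ℕ in atTop, Real.log (b (n + N)) / ↑(n + N) < c' :=
    (tendsto_add_atTop_nat N).eventually
      (eventually_lt_of_limsup_lt hbc' (isBoundedUnder_log_div hb))
  have hsmall : ∀ᶠ n : ℕ in atTop, Real.log n / n + c' * N / n ≤ c - c' := by
    have hlog : Tendsto (fun n : ℕ => Real.log n / n) atTop (𝓝 0) := by
      simpa [Function.comp_def] using
        (Real.tendsto_pow_log_div_mul_add_atTop 1 0 1 one_ne_zero).comp tendsto_natCast_atTop_atTop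
    exact (hlog.add (tendsto_const_div_atTop_nhds_zero_nat (c' * N))).eventually
      (eventually_le_nhds (by linarith))
  refine limsup_le_of_le
    (isCoboundedUnder_le_of_le atTop fun n => log_natCast_div_natCast_nonneg (a n) n) ?_
  filter_upwards [hab, hb_lt, hsmall, eventually_gt_atTop 0] with n hn hlt hsm hpos
  have hpos' : (0 : ℝ) < n := Nat.cast_pos.2 hpos
  push_cast at hlt
  calc Real.log (a n) / n ≤ (Real.log n + Real.log (b (n + N))) / n := by
        gcongr
        exact (log_natCast_le_log_natCast hn).trans (log_natCast_mul_le _ _)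
    _ ≤ (Real.log n + c' * (n + N)) / n := by
        gcongr
        exact ((div_lt_iff₀ (by positivity)).1 hlt).le
    _ = c' + (Real.log n / n + c' * N / n) := by field_simp; ring
    _ ≤ c := by linarith

end GrowthRate

lemma exists_orbit_transversal {α : Type*} {f : α → α} {n : ℕ} (hn : 0 < n) (S : Finset α)
    (hS : ∀ x ∈ S, IsPeriodicPt f n x) :
    ∃ E ⊆ S, (∀ x ∈ E, ∀ y ∈ E, x ≠ y → ∀ k, f^[k] x ≠ y) ∧ S.card ≤ n * E.card := by
  classical
  have hper : ∀ x ∈ S, x ∈ periodicPts f := fun x hx => mk_mem_periodicPts hn (hS x hx)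
  obtain ⟨E, hES, hinj, himage⟩ := exists_subset_injOn_image_eq_of_surjOn (S : Set α)
    (S.image (periodicOrbit f)) (by simpa using Set.surjOn_image (periodicOrbit f) (S : Set α))
  rw [coe_subset] at hES
  refine ⟨E, hES, fun x hx y hy hxy k hk => hxy (hinj hx hy ?_), ?_⟩
  · rw [← hk, periodicOrbit_apply_iterate_eq (hper x (hES hx))]
  rw [← card_image_of_injOn hinj, himage]
  refine card_le_mul_card_image S n fun O hO => ?_
  obtain ⟨x, hx, rfl⟩ := mem_image.1 hO
  calc #{a ∈ S | periodicOrbit f a = periodicOrbit f x} ≤ #((range n).image (f^[·] x)) := by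
        refine card_le_card fun a ha => ?_
        obtain ⟨haS, hax⟩ := mem_filter.1 ha
        have ha_orbit := self_mem_periodicOrbit (hper a haS)
        rw [hax, mem_periodicOrbit_iff (hper x hx)] at ha_orbit
        obtain ⟨k, rfl⟩ := ha_orbit
        exact mem_image.2 ⟨k % n, mem_range.2 (Nat.mod_lt k hn), (hS x hx).iterate_mod_apply k⟩
    _ ≤ n := card_image_le.trans_eq (card_range n)

section Separated

variable {X : Type*} [MetricSpace X]

lemma IsSeparated.mono {f : X → X} {ε ε' : ℝ} {n : ℕ} {E : Set X} (hE : IsSeparated f ε n E)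
    (h : ε' ≤ ε) : IsSeparated f ε' n E :=
  fun x hx y hy hxy => (hE x hx y hy hxy).imp fun _ ⟨hk, hd⟩ => ⟨hk, h.trans_lt hd⟩

variable [CompactSpace X] (f : X → X) {ε : ℝ} {n : ℕ}

lemma exists_code_dist_lt (hε : 0 < ε) :
    ∃ (m : ℕ) (c : X → Fin m), ∀ x y, c x = c y → dist x y < ε := by
  obtain ⟨t, -, ht, hcover⟩ :=
    finite_cover_balls_of_compact (isCompact_univ (X := X)) (half_pos hε)
  have hcenter : ∀ x : X, ∃ z : t, dist x z < ε / 2 := fun x => by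
    simpa using hcover (Set.mem_univ x)
  choose center hcenter using hcenter
  have := ht.fintype
  refine ⟨Fintype.card t, fun x => Fintype.equivFin t (center x), fun x y hxy => ?_⟩
  have hxy : center x = center y := (Fintype.equivFin t).injective hxy
  calc dist x y ≤ dist x (center x) + dist y (center x) := dist_triangle_right _ _ _
    _ < ε / 2 + ε / 2 := add_lt_add (hcenter x) (hxy ▸ hcenter y)
    _ = ε := add_halves ε

lemma exists_card_le_pow_of_isSeparated (hε : 0 < ε) :
    ∃ m : ℕ, ∀ (n : ℕ) (E : Finset X), IsSeparated f ε n E → E.card ≤ m ^ n := by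
  obtain ⟨m, c, hc⟩ := exists_code_dist_lt (X := X) hε
  refine ⟨m, fun n E hE => ?_⟩
  calc E.card ≤ (univ : Finset (Fin n → Fin m)).card := by
        refine card_le_card_of_injOn (fun x (k : Fin n) => c (f^[k] x))
          (fun _ _ => mem_coe.2 (mem_univ _)) fun x hx y hy hxy => ?_
        by_contra hne
        obtain ⟨k, hk, hfar⟩ := hE x hx y hy hne
        exact lt_asymm hfar (hc _ _ (congrFun hxy ⟨k, hk⟩))
    _ = m ^ n := by simp

lemma bddAbove_card_isSeparated (hε : 0 < ε) (n : ℕ) :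
    BddAbove {m : ℕ | ∃ E : Finset X, IsSeparated f ε n ↑E ∧ E.card = m} := by
  obtain ⟨m, hm⟩ := exists_card_le_pow_of_isSeparated f hε
  exact ⟨m ^ n, by rintro _ ⟨E, hE, rfl⟩; exact hm n E hE⟩

lemma card_le_sepCount (hε : 0 < ε) {E : Finset X} (hE : IsSeparated f ε n E) :
    E.card ≤ sepCount f ε n :=
  le_csSup (bddAbove_card_isSeparated f hε n) ⟨E, hE, rfl⟩

lemma exists_sepCount_le_pow (hε : 0 < ε) : ∃ m : ℕ, ∀ n, sepCount f ε n ≤ m ^ n := by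
  obtain ⟨m, hm⟩ := exists_card_le_pow_of_isSeparated f hε
  refine ⟨m, fun n => csSup_le ⟨0, ∅, by simp [IsSeparated], rfl⟩ ?_⟩
  rintro _ ⟨E, hE, rfl⟩
  exact hm n E hE

lemma sepCount_anti {ε' : ℝ} (hε' : 0 < ε') (h : ε' ≤ ε) (n : ℕ) :
    sepCount f ε n ≤ sepCount f ε' n :=
  csSup_le_csSup (bddAbove_card_isSeparated f hε' n) ⟨0, ∅, by simp [IsSeparated], rfl⟩
    fun _ ⟨E, hE, hcard⟩ => ⟨E, hE.mono h, hcard⟩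

lemma ncard_fixedPoints_iterate_le_mul_sepCount {η : ℝ} (hη : 0 < η) (hn : 0 < n)
    (hsep : ∀ x y : X, f^[n] x = x → f^[n] y = y → (∀ k : ℕ, f^[k] x ≠ y) →
      ∃ k < n, η < dist (f^[k] x) (f^[k] y)) :
    {x : X | f^[n] x = x}.ncard ≤ n * sepCount f η n := by
  rcases {x : X | f^[n] x = x}.finite_or_infinite with hfin | hinf
  · obtain ⟨E, hES, htrans, hcard⟩ :=
      exists_orbit_transversal hn hfin.toFinset fun x hx => hfin.mem_toFinset.1 hx
    have hE : IsSeparated f η n E := fun x hx y hy hxy =>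
      hsep x y (hfin.mem_toFinset.1 (hES hx)) (hfin.mem_toFinset.1 (hES hy)) (htrans x hx y hy hxy)
    rw [Set.ncard_eq_toFinset_card _ hfin]
    exact hcard.trans (Nat.mul_le_mul_left n (card_le_sepCount f hη hE))
  · simp [hinf.ncard]

end Separated

theorem stmt16_general {X : Type*} [MetricSpace X] [CompactSpace X] (f : X ≃ₜ X)
    (η : ℝ) (hη : 0 < η)
    (hsep : ∀ n : ℕ, 1 ≤ n → ∀ x y : X, (⇑f)^[n] x = x → (⇑f)^[n] y = y →
      (∀ k : ℕ, (⇑f)^[k] x ≠ y) → ∃ k < n, η < dist ((⇑f)^[k] x) ((⇑f)^[k] y))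
    (N : ℝ → ℕ)
    (hcount : ∀ ε : ℝ, 0 < ε → ε < η → ∀ n : ℕ,
      sepCount ⇑f ε n ≤ ({x : X | (⇑f)^[n + N ε] x = x}).ncard) :
    topEnt ⇑f = perGrowth ⇑f := by
  have hper : ∀ᶠ n in atTop, {x : X | f^[n] x = x}.ncard ≤ n * sepCount f η n :=
    (eventually_ge_atTop 1).mono fun n hn =>
      ncard_fixedPoints_iterate_le_mul_sepCount f hη hn (hsep n hn)
  obtain ⟨m, hm⟩ := exists_sepCount_le_pow f hη
  have hper_le_pow : ∀ᶠ n in atTop, {x : X | f^[n] x = x}.ncard ≤ (2 * m) ^ n :=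
    hper.mono fun n hn => hn.trans (mul_pow 2 m n ▸ Nat.mul_le_mul n.lt_two_pow_self.le (hm n))
  have hupper : ∀ ε : {e : ℝ // 0 < e}, entSep f ε ≤ perGrowth f := by
    rintro ⟨ε, hε⟩
    have hε₀ : 0 < min ε (η / 2) := lt_min hε (half_pos hη)
    have hε₀η : min ε (η / 2) < η := (min_le_right _ _).trans_lt (half_lt_self hη)
    refine growthRate_le_of_le_mul_shift (N := N (min ε (η / 2))) hper_le_pow
      ((eventually_ge_atTop 1).mono fun n hn => ?_)
    exact ((sepCount_anti f hε₀ (min_le_left _ _) n).trans (hcount _ hε₀ hε₀η n)).trans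
      (Nat.le_mul_of_pos_left _ hn)
  have hlower : perGrowth f ≤ entSep f η :=
    growthRate_le_of_le_mul_shift (N := 0) (Eventually.of_forall hm) hper
  have : Nonempty {e : ℝ // 0 < e} := ⟨⟨η, hη⟩⟩
  exact le_antisymm (ciSup_le hupper)
    (hlower.trans (le_ciSup ⟨_, Set.forall_mem_range.2 hupper⟩ (⟨η, hη⟩ : {e : ℝ // 0 < e})))

/-- Uniform separation of distinct periodic orbits together with the specification-based
counting bound gives `h_top(f) = p(f)`. -/
theorem stmt16 {X : Type*} [MetricSpace X] [CompactSpace X] (f : X ≃ₜ X)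
    (hfin : ∀ n : ℕ, 1 ≤ n → ({x : X | (⇑f)^[n] x = x}).Finite)
    (η : ℝ) (hη : 0 < η)
    (hsep : ∀ n : ℕ, 1 ≤ n → ∀ x y : X, (⇑f)^[n] x = x → (⇑f)^[n] y = y →
      (∀ k : ℕ, (⇑f)^[k] x ≠ y) → ∃ k < n, η < dist ((⇑f)^[k] x) ((⇑f)^[k] y))
    (N : ℝ → ℕ)
    (hcount : ∀ ε : ℝ, 0 < ε → ε < η → ∀ n : ℕ,
      sepCount ⇑f ε n ≤ ({x : X | (⇑f)^[n + N ε] x = x}).ncard) :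
    topEnt ⇑f = perGrowth ⇑f :=
  stmt16_general f η hη hsep N hcount
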